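/- arXiv:2601.21962 — 4 statements merged into one kernel-verified Lean document; each statement's English description precedes it below -/
import Mathlib

section
/- Let c be a circle-count function on states of Fin n. Then for every state σ, c(σ) ≤ c(S_A) + b(σ); equivalently, a(σ) − b(σ) + 2(c(σ) − 1) ≤ n + 2(c(S_A) − 1). (This is the combinatorial core of the proposition that the maximal A-degree of the bracket is bounded by the degree of the contribution of the all-A state.) -/
open LaurentPolynomial Polynomial Finset

/-- `aC σ` is the number of A-smoothings of the state `σ`, i.e. the number of
coordinates where `σ` takes the value `true`. -/
def aC {n : ℕ} (σ : Fin n → Bool) : ℕ := (Finset.univ.filter fun i => σ i = true).card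

/-- `bC σ = n - aC σ` is the number of B-smoothings of the state `σ`. -/
def bC {n : ℕ} (σ : Fin n → Bool) : ℕ := n - aC σ

/-- Two states are adjacent if they differ in exactly one coordinate. -/
def Adjacent {n : ℕ} (σ τ : Fin n → Bool) : Prop :=
  (Finset.univ.filter fun i => σ i ≠ τ i).card = 1

/-- `StateLE σ τ` iff `τ i = true` whenever `σ i = true`. -/
def StateLE {n : ℕ} (σ τ : Fin n → Bool) : Prop := ∀ i, σ i = true → τ i = true

/-- A circle-count function: `c σ ≥ 1` for all states and `|c σ - c τ| = 1`
for adjacent states. -/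
def IsCircleCount {n : ℕ} (c : (Fin n → Bool) → ℕ) : Prop :=
  (∀ σ, 1 ≤ c σ) ∧ ∀ σ τ, Adjacent σ τ → |(c σ : ℤ) - (c τ : ℤ)| = 1

/-- The all-A state: the constant-`true` state. -/
def SA (n : ℕ) : Fin n → Bool := fun _ => true

/-- The all-B state: the constant-`false` state. -/
def SB (n : ℕ) : Fin n → Bool := fun _ => false

/-- A state `σ` is A-maximal for `c` if `c σ = c S_A + b σ`. -/
def AMaximal {n : ℕ} (c : (Fin n → Bool) → ℕ) (σ : Fin n → Bool) : Prop :=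
  c σ = c (SA n) + bC σ

/-- A state `σ` is B-minimal for `c` if `c σ = c S_B + a σ`. -/
def BMinimal {n : ℕ} (c : (Fin n → Bool) → ℕ) (σ : Fin n → Bool) : Prop :=
  c σ = c (SB n) + aC σ

instance {n : ℕ} (c : (Fin n → Bool) → ℕ) : DecidablePred (AMaximal c) :=
  fun σ => inferInstanceAs (Decidable (c σ = c (SA n) + bC σ))

instance {n : ℕ} (c : (Fin n → Bool) → ℕ) : DecidablePred (BMinimal c) :=
  fun σ => inferInstanceAs (Decidable (c σ = c (SB n) + aC σ))

/-- The contribution `A^{a(σ)-b(σ)} (−A²−A⁻²)^{c(σ)-1} t^{T(σ)}` of the state `σ`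
to the Kauffman bracket; a Laurent polynomial in `A` over `ℤ[t]`, where `A` is the
Laurent variable `LaurentPolynomial.T 1` and `t` is `Polynomial.X`. -/
noncomputable def contrib {n : ℕ} (c T : (Fin n → Bool) → ℕ) (σ : Fin n → Bool) :
    LaurentPolynomial (Polynomial ℤ) :=
  LaurentPolynomial.T ((aC σ : ℤ) - (bC σ : ℤ)) *
    (-(LaurentPolynomial.T 2) - LaurentPolynomial.T (-2)) ^ (c σ - 1) *
    LaurentPolynomial.C (Polynomial.X ^ T σ)

/-- The Kauffman bracket state sum `⟨n, c, T⟩`. -/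
noncomputable def bracket (n : ℕ) (c T : (Fin n → Bool) → ℕ) :
    LaurentPolynomial (Polynomial ℤ) :=
  ∑ σ : Fin n → Bool, contrib c T σ

/-- The coefficient of `A^j` in a Laurent polynomial over `ℤ[t]`. -/
noncomputable def coeffA (P : LaurentPolynomial (Polynomial ℤ)) (j : ℤ) : Polynomial ℤ := P.coeff j

/-- The largest exponent of `A` with nonzero coefficient (junk value `0` for `P = 0`). -/
noncomputable def maxdeg (P : LaurentPolynomial (Polynomial ℤ)) : ℤ := WithBot.unbotD 0 P.coeff.support.max

/-- The smallest exponent of `A` with nonzero coefficient (junk value `0` for `P = 0`). -/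
noncomputable def mindeg (P : LaurentPolynomial (Polynomial ℤ)) : ℤ := WithTop.untopD 0 P.coeff.support.min

/-- `spanDeg P = maxdeg P - mindeg P`. -/
noncomputable def spanDeg (P : LaurentPolynomial (Polynomial ℤ)) : ℤ := maxdeg P - mindeg P

lemma aC_le_n {n : ℕ} (σ : Fin n → Bool) : aC σ ≤ n := by
  simpa [aC] using (Finset.card_filter_le (Finset.univ : Finset (Fin n)) _)

lemma adj_update {n : ℕ} (σ : Fin n → Bool) (i : Fin n) (h : σ i = false) :
    Adjacent σ (Function.update σ i true) := by
  unfold Adjacent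
  have : (Finset.univ.filter fun j => σ j ≠ Function.update σ i true j) = {i} := by
    ext j
    by_cases hj : j = i <;> simp [Function.update, hj, h]
  rw [this]; simp

lemma aC_update {n : ℕ} (σ : Fin n → Bool) (i : Fin n) (h : σ i = false) :
    aC (Function.update σ i true) = aC σ + 1 := by
  unfold aC
  have : (Finset.univ.filter fun j => Function.update σ i true j = true)
      = insert i (Finset.univ.filter fun j => σ j = true) := by
    ext j
    by_cases hj : j = i <;> simp [Function.update, hj, h]
  rw [this, Finset.card_insert_of_notMem (by simp [h])]

lemma key {n : ℕ} (c : (Fin n → Bool) → ℕ) (hc : IsCircleCount c) :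
    ∀ k (σ : Fin n → Bool), bC σ = k → c σ ≤ c (SA n) + bC σ := by
  intro k
  induction k with
  | zero =>
    intro σ hb
    have han : aC σ = n := by
      have := aC_le_n σ
      unfold bC at hb; omega
    have : σ = SA n := by
      funext i
      have : (Finset.univ.filter fun j => σ j = true) = Finset.univ := by
        apply Finset.eq_univ_of_card
        simpa [aC] using han
      have := Finset.eq_univ_iff_forall.mp this i
      simpa [SA] using this
    simp [this]
  | succ k ih =>
    intro σ hb
    have hex : ∃ i, σ i = false := by
      by_contra hcon
      push_neg at hcon
      have : (Finset.univ.filter fun j => σ j = true) = Finset.univ := by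
        apply Finset.eq_univ_iff_forall.mpr
        intro j; simpa using hcon j
      have : aC σ = n := by simp [aC, this]
      unfold bC at hb; omega
    obtain ⟨i, hi⟩ := hex
    set τ := Function.update σ i true with hτ
    have hadj := adj_update σ i hi
    have haτ : aC τ = aC σ + 1 := aC_update σ i hi
    have haσ : aC σ ≤ n := aC_le_n σ
    have haτn : aC τ ≤ n := aC_le_n τ
    have hbτ : bC τ = k := by unfold bC at hb ⊢; omega
    have hstep := hc.2 σ τ hadj
    have hle : c σ ≤ c τ + 1 := by
      rcases abs_eq (by norm_num : (0:ℤ) ≤ 1) |>.mp hstep with h | h <;> omega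
    have := ih τ hbτ
    unfold bC at *
    omega

/-- For any circle-count function, `c σ ≤ c S_A + b σ`; equivalently the maximal
`A`-degree of the contribution of `σ` is at most that of the all-A state. -/
theorem stmt2 {n : ℕ} (c : (Fin n → Bool) → ℕ) (hc : IsCircleCount c)
    (σ : Fin n → Bool) :
    c σ ≤ c (SA n) + bC σ ∧
    (aC σ : ℤ) - bC σ + 2 * ((c σ : ℤ) - 1) ≤ (n : ℤ) + 2 * ((c (SA n) : ℤ) - 1) := by
  have h1 := key c hc 0 (SA n) ?_
  · have h := key c hc (bC σ) σ rfl
    refine ⟨h, ?_⟩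
    have hab : aC σ + bC σ = n := by
      have := aC_le_n σ; unfold bC; omega
    have : (aC σ : ℤ) + bC σ = n := by exact_mod_cast hab
    omega
  · unfold bC aC SA
    simp
end

section
/- Let c be a circle-count function on states of Fin n. Then for every state σ, c(σ) ≤ c(S_B) + a(σ); equivalently, a(σ) − b(σ) − 2(c(σ) − 1) ≥ −n − 2(c(S_B) − 1). (This is the combinatorial core of the proposition that the minimal A-degree of the bracket is bounded below by the degree of the contribution of the all-B state.) -/
open LaurentPolynomial Polynomial Finset

lemma key_le {n : ℕ} (c : (Fin n → Bool) → ℕ) (hc : IsCircleCount c) :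
    ∀ k (σ : Fin n → Bool), aC σ = k → c σ ≤ c (SB n) + aC σ := by
  intro k
  induction k with
  | zero =>
    intro σ h
    have hσ : σ = SB n := by
      funext i
      have he : (Finset.univ.filter fun i => σ i = true) = ∅ :=
        Finset.card_eq_zero.mp h
      have hi : i ∉ (Finset.univ.filter fun i => σ i = true) := by simp [he]
      simp only [Finset.mem_filter, Finset.mem_univ, true_and] at hi
      simp [SB, hi]
    rw [hσ]; exact Nat.le_add_right _ _
  | succ k ih =>
    intro σ h
    obtain ⟨i, hi⟩ := Finset.card_pos.mp (show 0 < aC σ by omega)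
    simp only [Finset.mem_filter, Finset.mem_univ, true_and] at hi
    set τ := Function.update σ i false with hτ
    have hfil : (Finset.univ.filter fun j => τ j = true)
        = (Finset.univ.filter fun j => σ j = true).erase i := by
      ext j
      by_cases hji : j = i <;>
        simp [hτ, Function.update_apply, hji, hi]
    have haτ : aC τ = k := by
      have : aC τ = aC σ - 1 := by
        rw [aC, hfil, Finset.card_erase_of_mem (by simp [hi]), aC]
      omega
    have hadj : Adjacent σ τ := by
      have hs : (Finset.univ.filter fun j => σ j ≠ τ j) = {i} := by
        ext j
        by_cases hji : j = i <;>
          simp [hτ, Function.update_apply, hji, hi]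
      rw [Adjacent, hs, Finset.card_singleton]
    have habs := hc.2 σ τ hadj
    have hle : (c σ : ℤ) ≤ (c τ : ℤ) + 1 := by
      rcases (abs_eq (by norm_num : (0:ℤ) ≤ 1)).mp habs with h1 | h1 <;> omega
    have hih := ih τ haτ
    have h2 : c σ ≤ c τ + 1 := by exact_mod_cast hle
    omega

/-- For any circle-count function, `c σ ≤ c S_B + a σ`; equivalently the minimal
`A`-degree of the contribution of `σ` is at least that of the all-B state. -/
theorem stmt3 {n : ℕ} (c : (Fin n → Bool) → ℕ) (hc : IsCircleCount c)
    (σ : Fin n → Bool) :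
    c σ ≤ c (SB n) + aC σ ∧
    -(n : ℤ) - 2 * ((c (SB n) : ℤ) - 1) ≤ (aC σ : ℤ) - bC σ - 2 * ((c σ : ℤ) - 1) := by
  have h1 := key_le c hc (aC σ) σ rfl
  have h2 := aC_le_n σ
  have hb : (bC σ : ℤ) = (n : ℤ) - aC σ := by
    rw [bC]; push_cast [h2]; ring
  constructor
  · exact h1
  · have : (c σ : ℤ) ≤ c (SB n) + aC σ := by exact_mod_cast h1
    rw [hb]; linarith
end

section
/- Let c be a circle-count function and T : (Fin n → Bool) → ℕ any function. Every exponent j of A with nonzero coefficient in the bracket ⟨n, c, T⟩ satisfies −n − 2(c(S_B) − 1) ≤ j ≤ n + 2(c(S_A) − 1). In particular, if ⟨n, c, T⟩ ≠ 0 then maxdeg ⟨n, c, T⟩ ≤ n + 2(c(S_A) − 1), the maximal A-degree of the contribution of the all-A state, and mindeg ⟨n, c, T⟩ ≥ −n − 2(c(S_B) − 1), the minimal A-degree of the contribution of the all-B state. -/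
open LaurentPolynomial Polynomial Finset

open Pointwise in
lemma AddMonoidAlgebra_support_mul' (f g : LaurentPolynomial (Polynomial ℤ)) :
    ∀ j ∈ (f * g).coeff.support, ∃ a ∈ f.coeff.support, ∃ b ∈ g.coeff.support, a + b = j := by
  intro j hj
  have := AddMonoidAlgebra.support_coeff_mul_subset f g hj
  rwa [Finset.mem_add] at this

lemma circle_le' {n : ℕ} (c : (Fin n → Bool) → ℕ)
    (hc : ∀ σ τ, Adjacent σ τ → |(c σ : ℤ) - (c τ : ℤ)| = 1) :
    ∀ (d : ℕ) (σ τ : Fin n → Bool), (Finset.univ.filter fun i => σ i ≠ τ i).card = d →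
      (c σ : ℤ) ≤ c τ + d := by
  intro d
  induction d with
  | zero =>
    intro σ τ h
    have hστ : σ = τ := by
      funext i
      by_contra hne
      have hi : i ∈ Finset.univ.filter fun i => σ i ≠ τ i := by simp [hne]
      rw [Finset.card_eq_zero] at h
      simp [h] at hi
    subst hστ; simp
  | succ d ih =>
    intro σ τ h
    have hne : (Finset.univ.filter fun i => σ i ≠ τ i).Nonempty := by
      rw [← Finset.card_pos, h]; omega
    obtain ⟨i, hi⟩ := hne
    simp only [Finset.mem_filter, Finset.mem_univ, true_and] at hi
    set σ' := Function.update σ i (τ i) with hσ'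
    have hadj : Adjacent σ σ' := by
      unfold Adjacent
      have he : (Finset.univ.filter fun j => σ j ≠ σ' j) = {i} := by
        ext j
        simp only [Finset.mem_filter, Finset.mem_univ, true_and, Finset.mem_singleton, hσ']
        by_cases hj : j = i
        · subst hj; simp [Function.update_self, hi]
        · simp [Function.update_of_ne hj, hj]
      rw [he]; simp
    have h2 : (Finset.univ.filter fun j => σ' j ≠ τ j).card = d := by
      have he : (Finset.univ.filter fun j => σ' j ≠ τ j)
          = (Finset.univ.filter fun j => σ j ≠ τ j).erase i := by
        ext j
        simp only [Finset.mem_filter, Finset.mem_univ, true_and, Finset.mem_erase, hσ']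
        by_cases hj : j = i
        · subst hj; simp [Function.update_self]
        · simp [Function.update_of_ne hj, hj]
      rw [he, Finset.card_erase_of_mem (by simp [hi]), h]
      omega
    have h3 := hc σ σ' hadj
    have h4 := ih σ' τ h2
    have h5 : (c σ : ℤ) - c σ' ≤ 1 := by
      have := abs_le.mp (le_of_eq h3); omega
    push_cast
    omega

lemma support_T' (m : ℤ) : (LaurentPolynomial.T (R := Polynomial ℤ) m).coeff.support = {m} := by
  rw [← one_mul (T m), ← map_one (LaurentPolynomial.C (R := Polynomial ℤ))]
  exact support_C_mul_T_of_ne_zero one_ne_zero m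

lemma support_C' (p : Polynomial ℤ) : (LaurentPolynomial.C p).coeff.support ⊆ {0} := by
  rw [← mul_one (LaurentPolynomial.C p), ← LaurentPolynomial.T_zero (R := Polynomial ℤ)]
  exact support_C_mul_T p 0

lemma support_Dpow (m : ℕ) (j : ℤ)
    (hj : j ∈ ((-(T 2 : LaurentPolynomial (Polynomial ℤ)) - T (-2)) ^ m).coeff.support) :
    -(2 * m : ℤ) ≤ j ∧ j ≤ 2 * m := by
  induction m generalizing j with
  | zero =>
    rw [pow_zero, ← LaurentPolynomial.T_zero (R := Polynomial ℤ), support_T'] at hj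
    simp at hj; omega
  | succ m ih =>
    rw [pow_succ] at hj
    obtain ⟨a, ha, b, hb, hab⟩ := AddMonoidAlgebra_support_mul' _ _ _ hj
    have h1 := ih a ha
    have h2 : b = 2 ∨ b = -2 := by
      have := Finsupp.support_sub (f := (-(T 2 : LaurentPolynomial (Polynomial ℤ))).coeff) (g := (T (-2)).coeff) hb
      rw [Finset.mem_union, AddMonoidAlgebra.coeff_neg, Finsupp.support_neg, support_T', support_T'] at this
      simpa using this
    push_cast
    omega

lemma contrib_support_bound {n : ℕ} (c T : (Fin n → Bool) → ℕ) (σ : Fin n → Bool) (j : ℤ)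
    (hj : j ∈ (contrib c T σ).coeff.support) :
    (aC σ : ℤ) - bC σ - 2 * (c σ - 1 : ℕ) ≤ j ∧
      j ≤ (aC σ : ℤ) - bC σ + 2 * (c σ - 1 : ℕ) := by
  unfold contrib at hj
  obtain ⟨a, ha, b, hb, hab⟩ := AddMonoidAlgebra_support_mul' _ _ _ hj
  have hb0 : b = 0 := by simpa using support_C' _ hb
  obtain ⟨u, hu, v, hv, huv⟩ := AddMonoidAlgebra_support_mul' _ _ _ ha
  rw [support_T'] at hu
  simp only [Finset.mem_singleton] at hu
  have h3 := support_Dpow _ _ hv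
  subst hab huv hu hb0
  omega

/-- Every exponent of `A` with nonzero coefficient in the bracket lies between the
minimal degree of the all-B contribution and the maximal degree of the all-A
contribution; in particular the maxdeg and mindeg of a nonzero bracket are so bounded. -/
theorem stmt4 {n : ℕ} (c : (Fin n → Bool) → ℕ) (hc : IsCircleCount c)
    (T : (Fin n → Bool) → ℕ) :
    (∀ j : ℤ, coeffA (bracket n c T) j ≠ 0 →
      -(n : ℤ) - 2 * ((c (SB n) : ℤ) - 1) ≤ j ∧ j ≤ (n : ℤ) + 2 * ((c (SA n) : ℤ) - 1)) ∧
    (bracket n c T ≠ 0 →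
      maxdeg (bracket n c T) ≤ (n : ℤ) + 2 * ((c (SA n) : ℤ) - 1) ∧
      -(n : ℤ) - 2 * ((c (SB n) : ℤ) - 1) ≤ mindeg (bracket n c T)) := by
  have key : ∀ j : ℤ, coeffA (bracket n c T) j ≠ 0 →
      -(n : ℤ) - 2 * ((c (SB n) : ℤ) - 1) ≤ j ∧ j ≤ (n : ℤ) + 2 * ((c (SA n) : ℤ) - 1) := by
    intro j hj
    have hex : ∃ σ ∈ (Finset.univ : Finset (Fin n → Bool)), (contrib c T σ).coeff j ≠ 0 := by
      by_contra hcon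
      push_neg at hcon
      apply hj
      show (bracket n c T).coeff j = 0
      unfold bracket
      rw [AddMonoidAlgebra.coeff_sum, Finsupp.finset_sum_apply]
      exact Finset.sum_eq_zero hcon
    obtain ⟨σ, -, hσ⟩ := hex
    have hmem : j ∈ (contrib c T σ).coeff.support := Finsupp.mem_support_iff.mpr hσ
    have hbd := contrib_support_bound c T σ j hmem
    have haCn : aC σ ≤ n := by
      unfold aC
      calc (Finset.univ.filter fun i => σ i = true).card ≤ Finset.univ.card :=
            Finset.card_filter_le _ _
        _ = n := by simp
    have hbCdef : bC σ = n - aC σ := rfl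
    have hc1 : 1 ≤ c σ := hc.1 σ
    have hcastc : ((c σ - 1 : ℕ) : ℤ) = (c σ : ℤ) - 1 := by
      rw [Nat.cast_sub hc1]; simp
    have hcastb : ((bC σ : ℕ) : ℤ) = (n : ℤ) - aC σ := by
      rw [hbCdef, Nat.cast_sub haCn]
    have hsplit : (Finset.univ.filter fun i => σ i = true).card
        + (Finset.univ.filter fun i => ¬ σ i = true).card = n := by
      rw [Finset.card_filter_add_card_filter_not]
      simp
    have hdA : (Finset.univ.filter fun i => σ i ≠ SA n i).card = bC σ := by
      have he : (Finset.univ.filter fun i => σ i ≠ SA n i)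
          = Finset.univ.filter fun i => ¬ σ i = true := by
        apply Finset.filter_congr
        intro i _
        simp [SA]
      rw [he, hbCdef]
      unfold aC
      omega
    have hdB : (Finset.univ.filter fun i => σ i ≠ SB n i).card = aC σ := by
      have he : (Finset.univ.filter fun i => σ i ≠ SB n i)
          = Finset.univ.filter fun i => σ i = true := by
        apply Finset.filter_congr
        intro i _
        simp [SB]
      rw [he]
      rfl
    have hA : (c σ : ℤ) ≤ c (SA n) + bC σ := circle_le' c hc.2 (bC σ) σ (SA n) hdA
    have hB : (c σ : ℤ) ≤ c (SB n) + aC σ := circle_le' c hc.2 (aC σ) σ (SB n) hdB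
    omega
  refine ⟨key, fun hP => ?_⟩
  have hne : (bracket n c T).coeff.support.Nonempty :=
    Finsupp.support_nonempty_iff.mpr (mt AddMonoidAlgebra.coeff_eq_zero.mp hP)
  constructor
  · have hM : (bracket n c T).coeff.support.max' hne ∈ (bracket n c T).coeff.support :=
      Finset.max'_mem _ hne
    have heq : maxdeg (bracket n c T) = (bracket n c T).coeff.support.max' hne := by
      unfold maxdeg
      rw [← Finset.coe_max' hne]
      rfl
    rw [heq]
    exact (key _ (Finsupp.mem_support_iff.mp hM)).2
  · have hM : (bracket n c T).coeff.support.min' hne ∈ (bracket n c T).coeff.support :=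
      Finset.min'_mem _ hne
    have heq : mindeg (bracket n c T) = (bracket n c T).coeff.support.min' hne := by
      unfold mindeg
      rw [← Finset.coe_min' hne]
      rfl
    rw [heq]
    exact (key _ (Finsupp.mem_support_iff.mp hM)).1
end

section
/- Let c be a circle-count function on states of Fin n. If a state σ is B-minimal and τ ≤ σ, then τ is B-minimal. In particular, if σ is B-minimal then for every coordinate i with σ(i) = true, the state S_B^{(i)} obtained from the all-B state S_B by changing only coordinate i to true satisfies c(S_B^{(i)}) = c(S_B) + 1. -/
open LaurentPolynomial Polynomial Finset

lemma aC_eq_of_le' {n : ℕ} {τ σ : Fin n → Bool} (h : StateLE τ σ) :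
    aC σ = aC τ + (Finset.univ.filter fun i => σ i = true ∧ τ i = false).card := by
  unfold aC
  rw [← Finset.card_union_of_disjoint]
  · congr 1
    ext i
    simp only [Finset.mem_union, Finset.mem_filter, Finset.mem_univ, true_and]
    constructor
    · intro hs
      by_cases ht : τ i = true
      · exact Or.inl ht
      · exact Or.inr ⟨hs, by simpa using ht⟩
    · rintro (ht | ⟨hs, _⟩)
      · exact h i ht
      · exact hs
  · rw [Finset.disjoint_left]
    intro i hi hj
    simp only [Finset.mem_filter] at hi hj
    rw [hi.2] at hj
    simp at hj

lemma bound_of_le {n : ℕ} {c : (Fin n → Bool) → ℕ} (hc : IsCircleCount c) :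
    ∀ k (τ σ : Fin n → Bool), StateLE τ σ →
      (Finset.univ.filter fun i => σ i = true ∧ τ i = false).card = k →
      (c σ : ℤ) ≤ c τ + k := by
  intro k
  induction k with
  | zero =>
    intro τ σ h hcard
    have : σ = τ := by
      funext i
      have hi : ¬ (σ i = true ∧ τ i = false) := by
        intro hmem
        have : i ∈ Finset.univ.filter fun i => σ i = true ∧ τ i = false := by
          simp [hmem]
        rw [Finset.card_eq_zero] at hcard
        simp [hcard] at this
      cases hσ : σ i <;> cases hτ : τ i <;> simp_all [StateLE]
    simp [this]
  | succ k ih =>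
    intro τ σ h hcard
    have hne : (Finset.univ.filter fun i => σ i = true ∧ τ i = false).Nonempty := by
      rw [← Finset.card_pos, hcard]; omega
    obtain ⟨i, hi⟩ := hne
    simp only [Finset.mem_filter, Finset.mem_univ, true_and] at hi
    set τ' := Function.update τ i true with hτ'
    have hle' : StateLE τ' σ := by
      intro j hj
      by_cases hji : j = i
      · subst hji; exact hi.1
      · exact h j (by simpa [hτ', Function.update_of_ne hji] using hj)
    have hset : (Finset.univ.filter fun j => σ j = true ∧ τ' j = false)
        = (Finset.univ.filter fun j => σ j = true ∧ τ j = false).erase i := by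
      ext j
      simp only [Finset.mem_erase, Finset.mem_filter, Finset.mem_univ, true_and, hτ']
      by_cases hji : j = i
      · subst hji; simp [Function.update_self]
      · simp [Function.update_of_ne hji, hji]
    have hcard' : (Finset.univ.filter fun j => σ j = true ∧ τ' j = false).card = k := by
      rw [hset, Finset.card_erase_of_mem (by simp [hi]), hcard]; omega
    have hib := ih τ' σ hle' hcard'
    have hadj : Adjacent τ τ' := by
      unfold Adjacent
      have : (Finset.univ.filter fun j => τ j ≠ τ' j) = {i} := by
        ext j
        simp only [Finset.mem_filter, Finset.mem_univ, true_and, Finset.mem_singleton, hτ']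
        by_cases hji : j = i
        · subst hji; simp [Function.update_self, hi.2]
        · simp [Function.update_of_ne hji, hji]
      rw [this]; simp
    have habs := hc.2 τ τ' hadj
    have : (c τ' : ℤ) ≤ c τ + 1 := by
      rcases abs_eq (by norm_num : (1:ℤ) ≥ 0) |>.mp habs with h' | h' <;> omega
    push_cast
    push_cast at hib
    omega

/-- B-minimality propagates downwards: if `σ` is B-minimal and `τ ≤ σ` then `τ` is
B-minimal; in particular, if `σ` is B-minimal and `σ i = true`, then changing only
coordinate `i` of the all-B state to `true` increases the circle count by one. -/
theorem stmt7 {n : ℕ} (c : (Fin n → Bool) → ℕ) (hc : IsCircleCount c) :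
    (∀ σ τ : Fin n → Bool, BMinimal c σ → StateLE τ σ → BMinimal c τ) ∧
    (∀ σ : Fin n → Bool, BMinimal c σ → ∀ i : Fin n, σ i = true →
      c (Function.update (SB n) i true) = c (SB n) + 1) := by
  have key : ∀ σ τ : Fin n → Bool, BMinimal c σ → StateLE τ σ → BMinimal c τ := by
    intro σ τ hσ hτσ
    have hSBτ : StateLE (SB n) τ := by intro i h; simp [SB] at h
    have hdτ : (Finset.univ.filter fun i => τ i = true ∧ SB n i = false).card = aC τ := by
      unfold aC; congr 1; ext i; simp [SB]
    have h1 : (c τ : ℤ) ≤ c (SB n) + aC τ := by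
      simpa using bound_of_le hc (aC τ) (SB n) τ hSBτ hdτ
    set k := (Finset.univ.filter fun i => σ i = true ∧ τ i = false).card with hk
    have h2 : (c σ : ℤ) ≤ c τ + k := bound_of_le hc k τ σ hτσ rfl
    have h3 : aC σ = aC τ + k := aC_eq_of_le' hτσ
    have hmin : (c σ : ℤ) = c (SB n) + aC σ := by
      unfold BMinimal at hσ; push_cast [hσ]; ring
    unfold BMinimal
    have : (c τ : ℤ) = c (SB n) + aC τ := by
      rw [h3] at hmin; push_cast at hmin h1 h2 ⊢; omega
    exact_mod_cast this
  refine ⟨key, fun σ hσ i hi => ?_⟩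
  have hle : StateLE (Function.update (SB n) i true) σ := by
    intro j hj
    by_cases hji : j = i
    · subst hji; exact hi
    · simp [Function.update_of_ne hji, SB] at hj
  have hB := key σ _ hσ hle
  have ha : aC (Function.update (SB n) i true) = 1 := by
    unfold aC
    have : (Finset.univ.filter fun j => Function.update (SB n) i true j = true) = {i} := by
      ext j
      by_cases hji : j = i
      · subst hji; simp [Function.update_self]
      · simp [Function.update_of_ne hji, SB, hji]
    rw [this]; simp
  rw [hB, ha]
end
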